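/- arXiv:2312.06989 — 3 statements merged into one kernel-verified Lean document; each statement's English description precedes it below -/
import Mathlib

section
/- Let $p(r,u)$ be a joint distribution and $q(u|r)$ an auxiliary conditional distribution satisfying $KL(p(r,u) \| q(r,u)) \le KL(p(r)p(u) \| q(r,u))$, where $q(r,u) = p(r)q(u|r)$. Then the mutual information satisfies $I(r;u) \le \mathbb{E}_{p(r,u)}[\log q(u|r)] - \mathbb{E}_{p(r)p(u)}[\log q(u|r)]$ (the CLUB upper bound). -/
/-!
Both divergences split along `log (p(r) q(u|r))`. The hypothesis then reads
`I(r;u) + E_p[log p(u)] - E_p[log q] ≤ E_{p(r)p(u)}[log p(u)] - E_{p(r)p(u)}[log q]`,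
and the two `log p(u)` terms cancel: each is the expectation of a function of `u` alone,
whose law is `p(u)` under both distributions.
-/

open Finset Real

lemma mul_log_div_mul_eq {x a b q : ℝ} (hab : x ≠ 0 → a ≠ 0 ∧ b ≠ 0) (hq : q ≠ 0) :
    x * log (x / (a * q)) = x * log (x / (a * b)) + x * log b - x * log q := by
  rcases eq_or_ne x 0 with rfl | hx
  · simp
  obtain ⟨ha, hb⟩ := hab hx
  rw [log_div hx (mul_ne_zero ha hq), log_div hx (mul_ne_zero ha hb), log_mul ha hq,
    log_mul ha hb]
  ring

lemma mul_mul_log_mul_div_mul_eq (a b : ℝ) {q : ℝ} (hq : q ≠ 0) :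
    a * b * log (a * b / (a * q)) = a * b * log b - a * b * log q := by
  rcases eq_or_ne a 0 with rfl | ha
  · simp
  rcases eq_or_ne b 0 with rfl | hb
  · simp
  rw [mul_div_mul_left b q ha, log_div hb hq]
  ring

section Marginals

variable {R U : Type} [Fintype R] [Fintype U] {p : R → U → ℝ}

lemma marginal_ne_zero_of_ne_zero (hp : ∀ r u, 0 ≤ p r u) {r : R} {u : U} (h : p r u ≠ 0) :
    (∑ u', p r u') ≠ 0 ∧ (∑ r', p r' u) ≠ 0 := by
  have hpos := (hp r u).lt_of_ne' h
  exact ⟨(hpos.trans_le (single_le_sum (fun i _ => hp r i) (mem_univ u))).ne',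
    (hpos.trans_le (single_le_sum (fun i _ => hp i u) (mem_univ r))).ne'⟩

lemma sum_mul_log_div_marginal_mul_eq (hp : ∀ r u, 0 ≤ p r u) {q : R → U → ℝ}
    (hq : ∀ r u, q r u ≠ 0) :
    ∑ r, ∑ u, p r u * log (p r u / ((∑ u', p r u') * q r u)) =
      ∑ r, ∑ u, p r u * log (p r u / ((∑ u', p r u') * (∑ r', p r' u))) +
        ∑ r, ∑ u, p r u * log (∑ r', p r' u) - ∑ r, ∑ u, p r u * log (q r u) := by
  simp only [← sum_add_distrib, ← sum_sub_distrib]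
  exact sum_congr rfl fun r _ => sum_congr rfl fun u _ =>
    mul_log_div_mul_eq (marginal_ne_zero_of_ne_zero hp) (hq r u)

lemma sum_marginal_mul_log_div_marginal_mul_eq {q : R → U → ℝ} (hq : ∀ r u, q r u ≠ 0) :
    ∑ r, ∑ u, (∑ u', p r u') * (∑ r', p r' u) *
        log ((∑ u', p r u') * (∑ r', p r' u) / ((∑ u', p r u') * q r u)) =
      ∑ r, ∑ u, (∑ u', p r u') * (∑ r', p r' u) * log (∑ r', p r' u) -
        ∑ r, ∑ u, (∑ u', p r u') * (∑ r', p r' u) * log (q r u) := by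
  simp only [← sum_sub_distrib]
  exact sum_congr rfl fun r _ => sum_congr rfl fun u _ =>
    mul_mul_log_mul_div_mul_eq _ _ (hq r u)

lemma sum_mul_eq_sum_marginal_mul (hpsum : ∑ r, ∑ u, p r u = 1) (g : U → ℝ) :
    ∑ r, ∑ u, p r u * g u = ∑ r, ∑ u, (∑ u', p r u') * (∑ r', p r' u) * g u :=
  calc ∑ r, ∑ u, p r u * g u = ∑ u, (∑ r', p r' u) * g u := by
        rw [sum_comm]; simp only [sum_mul]
    _ = (∑ r, ∑ u', p r u') * ∑ u, (∑ r', p r' u) * g u := by rw [hpsum, one_mul]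
    _ = ∑ r, ∑ u, (∑ u', p r u') * (∑ r', p r' u) * g u := by
        rw [sum_mul]
        exact sum_congr rfl fun r _ => by rw [mul_sum]; simp only [mul_assoc]

end Marginals

theorem club_upper_bound_general {R U : Type} [Fintype R] [Fintype U]
    (p : R → U → ℝ) (hp : ∀ r u, 0 ≤ p r u)
    (hpsum : ∑ r, ∑ u, p r u = 1)
    (q : R → U → ℝ) (hq : ∀ r u, 0 < q r u)
    (hKL : ∑ r, ∑ u, p r u * Real.log (p r u / ((∑ u', p r u') * q r u)) ≤
      ∑ r, ∑ u, (∑ u', p r u') * (∑ r', p r' u) *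
        Real.log (((∑ u', p r u') * (∑ r', p r' u)) / ((∑ u', p r u') * q r u))) :
    ∑ r, ∑ u, p r u * Real.log (p r u / ((∑ u', p r u') * (∑ r', p r' u))) ≤
      (∑ r, ∑ u, p r u * Real.log (q r u)) -
      ∑ r, ∑ u, (∑ u', p r u') * (∑ r', p r' u) * Real.log (q r u) := by
  have hq0 : ∀ r u, q r u ≠ 0 := fun r u => (hq r u).ne'
  rw [sum_mul_log_div_marginal_mul_eq hp hq0,
    sum_marginal_mul_log_div_marginal_mul_eq hq0,
    sum_mul_eq_sum_marginal_mul hpsum] at hKL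
  linarith

/-- CLUB upper bound on mutual information (Cheng et al.), finite setting.
`p` is the joint distribution of `(r,u)`, `q` an auxiliary conditional `q(u|r)`
with full support.  If `KL(p(r,u) ‖ p(r)q(u|r)) ≤ KL(p(r)p(u) ‖ p(r)q(u|r))`,
then `I(r;u) ≤ E_{p(r,u)}[log q(u|r)] - E_{p(r)p(u)}[log q(u|r)]`. -/
theorem club_upper_bound {R U : Type} [Fintype R] [Fintype U]
    (p : R → U → ℝ) (hp : ∀ r u, 0 ≤ p r u)
    (hpsum : ∑ r, ∑ u, p r u = 1)
    (q : R → U → ℝ) (hq : ∀ r u, 0 < q r u)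
    (hqsum : ∀ r, ∑ u, q r u = 1)
    (hKL : ∑ r, ∑ u, p r u * Real.log (p r u / ((∑ u', p r u') * q r u)) ≤
      ∑ r, ∑ u, (∑ u', p r u') * (∑ r', p r' u) *
        Real.log (((∑ u', p r u') * (∑ r', p r' u)) / ((∑ u', p r u') * q r u))) :
    ∑ r, ∑ u, p r u * Real.log (p r u / ((∑ u', p r u') * (∑ r', p r' u))) ≤
      (∑ r, ∑ u, p r u * Real.log (q r u)) -
      ∑ r, ∑ u, (∑ u', p r u') * (∑ r', p r' u) * Real.log (q r u) :=
  club_upper_bound_general p hp hpsum q hq hKL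
end

section
/- The inverse binary entropy function satisfies $H_2^{-1}(p) \ge \frac{p}{2 \log_2(6/p)}$ for all $p \in (0, 1]$. -/
/-- Binary entropy function (base 2). -/
noncomputable def H2 (t : ℝ) : ℝ := -t * Real.logb 2 t - (1 - t) * Real.logb 2 (1 - t)

/-- Inverse of the binary entropy function on `[0, 1/2]`. -/
noncomputable def H2inv (p : ℝ) : ℝ := sSup {t | t ∈ Set.Icc (0:ℝ) (1/2) ∧ H2 t ≤ p}

lemma log_le_mul_log_two {L : ℝ} (hL : 0 < L) : Real.log L ≤ L * Real.log 2 := by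
  have h2 : (0:ℝ) < Real.log 2 := Real.log_pos one_lt_two
  have h1 : Real.log (L * Real.log 2) ≤ L * Real.log 2 - 1 :=
    Real.log_le_sub_one_of_pos (by positivity)
  rw [Real.log_mul (ne_of_gt hL) (ne_of_gt h2)] at h1
  have h3 : Real.exp (-1) ≤ Real.log 2 := by
    have he : (2.7182818283 : ℝ) < Real.exp 1 := Real.exp_one_gt_d9
    have hl : (0.6931471803 : ℝ) < Real.log 2 := Real.log_two_gt_d9
    have hinv : Real.exp (-1) * Real.exp 1 = 1 := by
      rw [← Real.exp_add]; norm_num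
    nlinarith [Real.exp_pos (-1)]
  have h4 : -1 ≤ Real.log (Real.log 2) := by
    calc (-1 : ℝ) = Real.log (Real.exp (-1)) := (Real.log_exp _).symm
    _ ≤ Real.log (Real.log 2) := Real.log_le_log (Real.exp_pos _) h3
  linarith

lemma one_le_log_three : (1:ℝ) ≤ Real.log 3 := by
  have he : Real.exp 1 < 2.7182818286 := Real.exp_one_lt_d9
  calc (1:ℝ) = Real.log (Real.exp 1) := (Real.log_exp _).symm
  _ ≤ Real.log 3 := Real.log_le_log (Real.exp_pos _) (by linarith)

lemma H2_le_logb {t : ℝ} (ht0 : 0 < t) (ht1 : t < 1) :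
    H2 t ≤ t * Real.logb 2 (3 / t) := by
  have h2 : (0:ℝ) < Real.log 2 := Real.log_pos one_lt_two
  have h1t : (0:ℝ) < 1 - t := by linarith
  have key : -t ≤ (1 - t) * Real.log (1 - t) := by
    have := Real.one_sub_inv_le_log_of_pos h1t
    have h' : (1 - t) * (1 - (1 - t)⁻¹) ≤ (1 - t) * Real.log (1 - t) :=
      mul_le_mul_of_nonneg_left this (le_of_lt h1t)
    have : (1 - t) * (1 - (1 - t)⁻¹) = -t := by field_simp; ring
    linarith
  have h3 : t ≤ t * Real.log 3 := by
    nlinarith [one_le_log_three]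
  have hlog : Real.log (3 / t) = Real.log 3 - Real.log t := Real.log_div (by norm_num) (ne_of_gt ht0)
  unfold H2 Real.logb
  rw [hlog]
  have h := (div_le_div_iff_of_pos_right h2).mpr
    (show -t * Real.log t - (1 - t) * Real.log (1 - t) ≤ t * (Real.log 3 - Real.log t) by
      nlinarith)
  calc -t * (Real.log t / Real.log 2) - (1 - t) * (Real.log (1 - t) / Real.log 2)
      = (-t * Real.log t - (1 - t) * Real.log (1 - t)) / Real.log 2 := by ring
    _ ≤ (t * (Real.log 3 - Real.log t)) / Real.log 2 := h
    _ = t * ((Real.log 3 - Real.log t) / Real.log 2) := by ring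

/-- Calabro's bound on the inverse binary entropy:
`H₂⁻¹(p) ≥ p / (2 log₂(6/p))` for all `p ∈ (0, 1]`. -/
theorem inverse_binary_entropy_bound (p : ℝ) (hp : p ∈ Set.Ioc (0:ℝ) 1) :
    p / (2 * Real.logb 2 (6 / p)) ≤ H2inv p := by
  obtain ⟨hp0, hp1⟩ := hp
  have h2 : (0:ℝ) < Real.log 2 := Real.log_pos one_lt_two
  set L := Real.logb 2 (6 / p) with hLdef
  have h6p : (4:ℝ) ≤ 6 / p := by
    rw [le_div_iff₀ hp0]; nlinarith
  have hlogb4 : Real.logb 2 4 = 2 := by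
    rw [show (4:ℝ) = 2^(2:ℕ) by norm_num, Real.logb, Real.log_pow]
    field_simp; norm_num
  have hL2 : 2 ≤ L := by
    rw [← hlogb4]
    exact Real.logb_le_logb_of_le one_lt_two (by norm_num) h6p
  have hLpos : 0 < L := by linarith
  set t := p / (2 * L) with htdef
  have ht0 : 0 < t := div_pos hp0 (by linarith)
  have ht4 : t ≤ 1/4 := by
    rw [htdef, div_le_div_iff₀ (by linarith) (by norm_num)]
    nlinarith
  have ht1 : t < 1 := by linarith
  -- 3 / t = (6/p) * L
  have h3t : 3 / t = (6 / p) * L := by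
    rw [htdef]; field_simp; ring
  have hlogbL : Real.logb 2 L ≤ L := by
    rw [Real.logb, div_le_iff₀ h2]
    exact log_le_mul_log_two hLpos
  have hsplit : Real.logb 2 (3 / t) = L + Real.logb 2 L := by
    rw [h3t, Real.logb_mul (by positivity) (ne_of_gt hLpos)]
  have hH : H2 t ≤ p := by
    have h1 := H2_le_logb ht0 ht1
    have h2' : t * Real.logb 2 (3 / t) ≤ t * (2 * L) := by
      apply mul_le_mul_of_nonneg_left _ (le_of_lt ht0)
      rw [hsplit]; linarith
    have h3' : t * (2 * L) = p := by
      rw [htdef]; field_simp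
    linarith
  have hmem : t ∈ {t | t ∈ Set.Icc (0:ℝ) (1/2) ∧ H2 t ≤ p} :=
    ⟨⟨le_of_lt ht0, by linarith⟩, hH⟩
  have hbdd : BddAbove {t | t ∈ Set.Icc (0:ℝ) (1/2) ∧ H2 t ≤ p} :=
    ⟨1/2, fun x hx => hx.1.2⟩
  exact le_csSup hbdd hmem
end

section
/- Let $r$ be a finite random variable, $u$ a binary random variable, and $A$ a randomized function with $u \perp A(r) \mid r$. If $H^* = H(u \mid r) > 0$ (in bits), then the attribute inference accuracy of any such adversary is bounded: $\Pr(A(r) = u) \le 1 - \frac{H^*}{2\log_2(6/H^*)}$. -/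
/-!
Per fibre `r = rv`, an adversary that is conditionally independent of `u` errs with probability
at least `min (P(u = 0 | rv), P(u = 1 | rv))`, since its error is a convex combination of these
two numbers. The binary entropy of `α` is bounded by `ψ (min α (1 - α))` with
`ψ x = x - x log x`, and `ψ` is concave and increasing on `[0, 1]`, so Jensen's inequality turns
the fibrewise bounds into `H(u | r) · log 2 ≤ ψ (Pr(A(r) ≠ u))`. Inverting `ψ` gives the
accuracy bound.
-/

open Finset Real Set

/-- `binEntropy x ≤ binEntropyEnvelope x` for `x ≤ 1/2`, because `negMulLog (1 - x) ≤ x`;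
unlike `binEntropy`, the envelope is increasing on all of `[0, 1]`. -/
noncomputable def binEntropyEnvelope (x : ℝ) : ℝ := x + negMulLog x

theorem binEntropyEnvelope_one : binEntropyEnvelope 1 = 1 := by
  simp [binEntropyEnvelope]

theorem binEntropy_le_binEntropyEnvelope_min {p : ℝ} (hp₀ : 0 ≤ p) (hp₁ : p ≤ 1) :
    binEntropy p ≤ binEntropyEnvelope (min p (1 - p)) := by
  wlog hp : p ≤ 1 - p generalizing p
  · simpa [min_comm] using this (p := 1 - p) (by linarith) (by linarith) (by linarith)
  rw [min_eq_left hp, binEntropy_eq_negMulLog_add_negMulLog_one_sub, binEntropyEnvelope]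
  linarith [negMulLog_le_one_sub_self (x := 1 - p) (by linarith)]

theorem concaveOn_binEntropyEnvelope : ConcaveOn ℝ (Ici 0) binEntropyEnvelope :=
  (concaveOn_id (convex_Ici 0)).add concaveOn_negMulLog

theorem monotoneOn_binEntropyEnvelope : MonotoneOn binEntropyEnvelope (Icc 0 1) := by
  have hderiv : ∀ x ∈ Ioo (0 : ℝ) 1, HasDerivAt binEntropyEnvelope (-log x) x := fun x hx =>
    ((hasDerivAt_id x).add (hasDerivAt_negMulLog hx.1.ne')).congr_deriv (by ring)
  refine monotoneOn_of_deriv_nonneg (convex_Icc 0 1)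
    (by unfold binEntropyEnvelope; fun_prop) ?_ ?_ <;> rw [interior_Icc]
  · exact fun x hx => (hderiv x hx).differentiableAt.differentiableWithinAt
  · intro x hx
    rw [(hderiv x hx).deriv]
    exact neg_nonneg.2 (log_nonpos hx.1.le hx.2.le)

theorem sum_mul_binEntropy_le_binEntropyEnvelope {ι : Type*} [Fintype ι] {p p' : ι → ℝ}
    {e : ℝ} (hp : ∀ i, 0 ≤ p i) (hp' : ∀ i, 0 ≤ p' i) (hsum : ∑ i, (p i + p' i) = 1)
    (he : ∑ i, min (p i) (p' i) ≤ e) (he₁ : e ≤ 1) :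
    ∑ i, (p i + p' i) * binEntropy (p i / (p i + p' i)) ≤ binEntropyEnvelope e := by
  set w := fun i => p i + p' i
  set α := fun i => p i / (p i + p' i)
  have hw : ∀ i, 0 ≤ w i := fun i => add_nonneg (hp i) (hp' i)
  have hwα : ∀ i, w i * α i = p i := fun i =>
    mul_div_cancel_of_imp' fun h => by linarith [hp i, hp' i, show p i + p' i = 0 from h]
  have hα : ∀ i, α i ∈ Set.Icc 0 1 := fun i =>
    ⟨div_nonneg (hp i) (hw i), div_le_one_of_le₀ (le_add_of_nonneg_right (hp' i)) (hw i)⟩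
  have hmin : ∀ i, w i * min (α i) (1 - α i) = min (p i) (p' i) := fun i => by
    rw [mul_min_of_nonneg _ _ (hw i), mul_one_sub, hwα]
    simp [w]
  have hmin₀ : ∀ i, 0 ≤ min (α i) (1 - α i) := fun i =>
    le_min (hα i).1 (sub_nonneg.2 (hα i).2)
  calc ∑ i, w i * binEntropy (α i)
      ≤ ∑ i, w i * binEntropyEnvelope (min (α i) (1 - α i)) :=
        sum_le_sum fun i _ => mul_le_mul_of_nonneg_left
          (binEntropy_le_binEntropyEnvelope_min (hα i).1 (hα i).2) (hw i)
    _ ≤ binEntropyEnvelope (∑ i, w i * min (α i) (1 - α i)) := by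
        simpa only [smul_eq_mul] using concaveOn_binEntropyEnvelope.le_map_sum
          (fun i _ => hw i) hsum fun i _ => mem_Ici.2 (hmin₀ i)
    _ ≤ binEntropyEnvelope e := by
        simp only [hmin]
        exact monotoneOn_binEntropyEnvelope
          ⟨sum_nonneg fun i _ => le_min (hp i) (hp' i), he.trans he₁⟩
          ⟨(sum_nonneg fun i _ => le_min (hp i) (hp' i)).trans he, he₁⟩ he

theorem one_le_logb_six_div {h : ℝ} (hh : 0 < h) (h3 : h ≤ 3) : 1 ≤ logb 2 (6 / h) := by
  rw [le_logb_iff_rpow_le one_lt_two (by positivity), rpow_one, le_div_iff₀ hh]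
  linarith

theorem binEntropyEnvelope_div_two_logb_lt {h : ℝ} (hh : 0 < h) (h₁ : h * log 2 ≤ 1) :
    binEntropyEnvelope (h / (2 * logb 2 (6 / h))) < h * log 2 := by
  have hlog2 : 1 / 3 < log 2 := by linarith [log_two_gt_d9]
  have h3 : h ≤ 3 := by nlinarith
  set L := logb 2 (6 / h) with hL
  have hL1 : 1 ≤ L := one_le_logb_six_div hh h3
  have hLlog : L * log 2 = log (6 / h) := by rw [hL, logb, div_mul_cancel₀ _ (by positivity)]
  set c := h / (2 * L) with hc
  have hc0 : 0 < c := by positivity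
  -- `log x ≤ x / e` at `x = 6 / h`
  have hxlog : exp 1 * h * (L * log 2) ≤ 6 := by
    have := log_le_sub_one_of_pos (x := 6 / h / exp 1) (by positivity)
    rw [log_div (by positivity) (exp_pos 1).ne', log_exp, ← hLlog] at this
    have := mul_le_mul_of_nonneg_left this (by positivity : 0 ≤ exp 1 * h)
    field_simp at this
    linarith
  have hkey : exp 1 * h ^ 2 < 36 * c := by
    rw [hc, mul_div_assoc', lt_div_iff₀ (by positivity)]
    nlinarith
  have hlog : 1 - log c < 2 * (L * log 2) := by
    have := log_lt_log (by positivity) hkey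
    rw [log_mul (by positivity) (by positivity), log_exp, log_pow, log_mul (by norm_num) hc0.ne',
      show (36 : ℝ) = 6 ^ 2 by norm_num, log_pow] at this
    rw [hLlog, log_div (by norm_num) hh.ne']
    push_cast at this
    linarith
  have hcL : h * log 2 = 2 * (L * log 2) * c := by rw [hc]; field_simp
  rw [binEntropyEnvelope, negMulLog, hcL]
  nlinarith

theorem div_two_logb_le_of_mul_log_two_le {h e : ℝ} (hh : 0 < h) (he₀ : 0 ≤ e) (he₁ : e ≤ 1)
    (he : h * log 2 ≤ binEntropyEnvelope e) : h / (2 * logb 2 (6 / h)) ≤ e := by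
  have hmax : binEntropyEnvelope e ≤ 1 := binEntropyEnvelope_one ▸
    monotoneOn_binEntropyEnvelope ⟨he₀, he₁⟩ ⟨zero_le_one, le_rfl⟩ he₁
  have h₁ : h * log 2 ≤ 1 := he.trans hmax
  have hL := one_le_logb_six_div hh (by nlinarith [log_two_gt_d9])
  by_contra! hlt
  have hc₁ : h / (2 * logb 2 (6 / h)) ≤ 1 := by
    rw [div_le_one (by positivity)]
    nlinarith [log_two_gt_d9]
  exact (binEntropyEnvelope_div_two_logb_lt hh h₁).not_ge <| he.trans <|
    monotoneOn_binEntropyEnvelope ⟨he₀, he₁⟩ ⟨by positivity, hc₁⟩ hlt.le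

theorem min_le_add_of_mul_eq_mul {p₀ p₁ s₀ s₁ j₀₁ j₁₀ : ℝ} (hp₀ : 0 ≤ p₀) (hp₁ : 0 ≤ p₁)
    (hs₀ : 0 ≤ s₀) (hs₁ : 0 ≤ s₁) (hj₀₁ : 0 ≤ j₀₁) (hj₁₀ : 0 ≤ j₁₀) (hs : s₀ + s₁ = p₀ + p₁)
    (h₀₁ : j₀₁ * (p₀ + p₁) = p₀ * s₁) (h₁₀ : j₁₀ * (p₀ + p₁) = p₁ * s₀) :
    min p₀ p₁ ≤ j₀₁ + j₁₀ := by
  rcases (add_nonneg hp₀ hp₁).eq_or_lt with hq | hq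
  · have : p₀ = 0 ∧ p₁ = 0 := ⟨by linarith, by linarith⟩
    simp [this.1, this.2, add_nonneg hj₀₁ hj₁₀]
  refine le_of_mul_le_mul_right ?_ hq
  calc min p₀ p₁ * (p₀ + p₁) = min p₀ p₁ * s₁ + min p₀ p₁ * s₀ := by rw [← hs]; ring
    _ ≤ p₀ * s₁ + p₁ * s₀ := by gcongr; exacts [min_le_left _ _, min_le_right _ _]
    _ = (j₀₁ + j₁₀) * (p₀ + p₁) := by rw [add_mul, h₀₁, h₁₀]

theorem add_mul_binEntropy_div {p₀ p₁ : ℝ} (hp₀ : 0 ≤ p₀) (hp₁ : 0 ≤ p₁) :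
    (p₀ + p₁) * binEntropy (p₀ / (p₀ + p₁)) =
      -(p₀ * log (p₀ / (p₀ + p₁)) + p₁ * log (p₁ / (p₀ + p₁))) := by
  rcases (add_nonneg hp₀ hp₁).eq_or_lt with hq | hq
  · have : p₀ = 0 ∧ p₁ = 0 := ⟨by linarith, by linarith⟩
    simp [this.1, this.2]
  have h₁ : 1 - p₀ / (p₀ + p₁) = p₁ / (p₀ + p₁) := by field_simp; ring
  have hq₀ : (p₀ + p₁) * (p₀ / (p₀ + p₁)) = p₀ := mul_div_cancel₀ _ hq.ne'
  have hq₁ : (p₀ + p₁) * (p₁ / (p₀ + p₁)) = p₁ := mul_div_cancel₀ _ hq.ne'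
  rw [binEntropy_eq_negMulLog_add_negMulLog_one_sub, h₁, negMulLog, negMulLog]
  linear_combination (-log (p₀ / (p₀ + p₁))) * hq₀ + (-log (p₁ / (p₀ + p₁))) * hq₁

section EventWeight

variable {Ω R : Type*} [Fintype Ω] (P : Ω → ℝ)

def eventWeight (S : Ω → Prop) [DecidablePred S] : ℝ := ∑ ω, if S ω then P ω else 0

theorem eventWeight_nonneg (hP : ∀ ω, 0 ≤ P ω) (S : Ω → Prop) [DecidablePred S] :
    0 ≤ eventWeight P S :=
  sum_nonneg fun ω _ => ite_nonneg (hP ω) le_rfl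

theorem eventWeight_le_sum (hP : ∀ ω, 0 ≤ P ω) (S : Ω → Prop) [DecidablePred S] :
    eventWeight P S ≤ ∑ ω, P ω :=
  sum_le_sum fun ω _ => by split_ifs; exacts [le_rfl, hP ω]

theorem eventWeight_add_eventWeight_not (S : Ω → Prop) [DecidablePred S] :
    eventWeight P S + eventWeight P (fun ω => ¬S ω) = ∑ ω, P ω := by
  rw [eventWeight, eventWeight, ← sum_add_distrib]
  exact sum_congr rfl fun ω _ => by by_cases h : S ω <;> simp [h]

theorem eventWeight_and_true_add_and_false (S : Ω → Prop) [DecidablePred S] (f : Ω → Bool) :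
    eventWeight P (fun ω => S ω ∧ f ω = true) + eventWeight P (fun ω => S ω ∧ f ω = false) =
      eventWeight P S := by
  rw [eventWeight, eventWeight, eventWeight, ← sum_add_distrib]
  exact sum_congr rfl fun ω _ => by cases f ω <;> simp

theorem eventWeight_true_false_add_false_true (S : Ω → Prop) [DecidablePred S] (u A : Ω → Bool) :
    eventWeight P (fun ω => S ω ∧ u ω = true ∧ A ω = false) +
        eventWeight P (fun ω => S ω ∧ u ω = false ∧ A ω = true) =
      eventWeight P (fun ω => S ω ∧ A ω ≠ u ω) := by
  rw [eventWeight, eventWeight, eventWeight, ← sum_add_distrib]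
  exact sum_congr rfl fun ω _ => by cases u ω <;> cases A ω <;> simp

variable [Fintype R] [DecidableEq R]

theorem sum_eventWeight_fiber (r : Ω → R) :
    ∑ rv, eventWeight P (fun ω => r ω = rv) = ∑ ω, P ω := by
  simp only [eventWeight, ← sum_filter]
  exact sum_fiberwise univ r P

theorem sum_eventWeight_fiber_and (r : Ω → R) (S : Ω → Prop) [DecidablePred S] :
    ∑ rv, eventWeight P (fun ω => r ω = rv ∧ S ω) = eventWeight P S := by
  simpa only [eventWeight, ite_and] using
    sum_eventWeight_fiber (fun ω => if S ω then P ω else 0) r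

noncomputable def condEntropyBits {α : Type*} [Fintype α] [DecidableEq α] (r : Ω → R)
    (u : Ω → α) : ℝ :=
  -(∑ rv, ∑ a, eventWeight P (fun ω => r ω = rv ∧ u ω = a) *
    logb 2 (eventWeight P (fun ω => r ω = rv ∧ u ω = a) / eventWeight P (fun ω => r ω = rv)))

/-- `u ⟂ A | r`, in the multiplicative form `P(r, u, A) P(r) = P(r, u) P(r, A)`, which says
nothing on null fibres. -/
def CondIndepGiven {α β : Type*} [DecidableEq α] [DecidableEq β] (r : Ω → R) (u : Ω → α)
    (A : Ω → β) : Prop :=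
  ∀ rv a b, eventWeight P (fun ω => r ω = rv ∧ u ω = a ∧ A ω = b) *
      eventWeight P (fun ω => r ω = rv) =
    eventWeight P (fun ω => r ω = rv ∧ u ω = a) * eventWeight P (fun ω => r ω = rv ∧ A ω = b)

theorem condEntropyBits_mul_log_two_le (hP : ∀ ω, 0 ≤ P ω) (hPsum : ∑ ω, P ω = 1)
    (r : Ω → R) (u A : Ω → Bool) (hindep : CondIndepGiven P r u A) :
    condEntropyBits P r u * log 2 ≤ binEntropyEnvelope (eventWeight P (fun ω => A ω ≠ u ω)) := by
  set p := fun rv a => eventWeight P (fun ω => r ω = rv ∧ u ω = a)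
  set s := fun rv b => eventWeight P (fun ω => r ω = rv ∧ A ω = b)
  set j := fun rv a b => eventWeight P (fun ω => r ω = rv ∧ u ω = a ∧ A ω = b)
  have hp : ∀ rv, p rv true + p rv false = eventWeight P (fun ω => r ω = rv) := fun rv =>
    eventWeight_and_true_add_and_false P _ u
  have hs : ∀ rv, s rv true + s rv false = eventWeight P (fun ω => r ω = rv) := fun rv =>
    eventWeight_and_true_add_and_false P _ A
  have herr : ∑ rv, (j rv true false + j rv false true) = eventWeight P (fun ω => A ω ≠ u ω) := by
    simp only [j, eventWeight_true_false_add_false_true, sum_eventWeight_fiber_and]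
  have hw := eventWeight_nonneg P hP
  calc condEntropyBits P r u * log 2
      = ∑ rv, (p rv true + p rv false) * binEntropy (p rv true / (p rv true + p rv false)) := by
        rw [condEntropyBits, neg_mul, sum_mul, ← sum_neg_distrib]
        refine sum_congr rfl fun rv _ => ?_
        rw [add_mul_binEntropy_div (hw _) (hw _),
          hp, Fintype.sum_bool, add_mul, logb, logb]
        field_simp
    _ ≤ binEntropyEnvelope (eventWeight P (fun ω => A ω ≠ u ω)) := by
        refine sum_mul_binEntropy_le_binEntropyEnvelope (fun rv => hw _) (fun rv => hw _) ?_ ?_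
          (hPsum ▸ eventWeight_le_sum P hP _)
        · simp only [hp, sum_eventWeight_fiber, hPsum]
        · rw [← herr]
          refine sum_le_sum fun rv _ => min_le_add_of_mul_eq_mul
            (s₀ := s rv true) (s₁ := s rv false) (hw _) (hw _) (hw _) (hw _) (hw _) (hw _)
            (by rw [hs, hp]) (by rw [hp]; exact hindep rv true false)
            (by rw [hp]; exact hindep rv false true)

end EventWeight

/-- Privacy guarantee against worst-case attribute inference (Theorem 2 of
TAPPFL), finite setting.  `u` is a binary private attribute, `r` the learnt
representation, and `A` any (possibly randomized) adversary with
`u ⟂ A | r`.  If `H* = H(u|r) > 0` (bits), then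
`Pr(A(r) = u) ≤ 1 - H*/(2 log₂(6/H*))`. -/
theorem attribute_inference_accuracy_bound {Ω R : Type} [Fintype Ω] [Fintype R]
    [DecidableEq R]
    (P : Ω → ℝ) (hP : ∀ ω, 0 ≤ P ω) (hPsum : ∑ ω, P ω = 1)
    (r : Ω → R) (u : Ω → Bool) (A : Ω → Bool)
    (hindep : ∀ (rv : R) (a b : Bool),
      (∑ ω, if r ω = rv ∧ u ω = a ∧ A ω = b then P ω else 0) *
        (∑ ω, if r ω = rv then P ω else 0) =
      (∑ ω, if r ω = rv ∧ u ω = a then P ω else 0) *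
        (∑ ω, if r ω = rv ∧ A ω = b then P ω else 0))
    (Hstar : ℝ)
    (hHdef : Hstar = -(∑ rv : R, ∑ a : Bool,
        (∑ ω, if r ω = rv ∧ u ω = a then P ω else 0) *
          Real.logb 2 ((∑ ω, if r ω = rv ∧ u ω = a then P ω else 0) /
            (∑ ω, if r ω = rv then P ω else 0))))
    (hHpos : 0 < Hstar) :
    (∑ ω, if A ω = u ω then P ω else 0) ≤
      1 - Hstar / (2 * Real.logb 2 (6 / Hstar)) := by
  have hent : Hstar * log 2 ≤ binEntropyEnvelope (eventWeight P (fun ω => A ω ≠ u ω)) :=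
    hHdef ▸ condEntropyBits_mul_log_two_le P hP hPsum r u A hindep
  have hbound := div_two_logb_le_of_mul_log_two_le hHpos (eventWeight_nonneg P hP _)
    (hPsum ▸ eventWeight_le_sum P hP _) hent
  have hsplit := eventWeight_add_eventWeight_not P (fun ω => A ω = u ω)
  change eventWeight P (fun ω => A ω = u ω) ≤ _
  linarith
end
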